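/- arXiv:1507.04800 — 3 statements merged into one kernel-verified Lean document; each statement's English description precedes it below -/
import Mathlib

section
/- If G is a distance preserving graph with at least 2 vertices, then for any graph H the lexicographic product G[H] is distance preserving. -/
/-!
If the projection `S` of a vertex set `T` of `G[H]` is isometric in `G` and every vertex of `S`
has a neighbour in `S`, then `T` is isometric in `G[H]`: a geodesic of `G` inside `S` lifts to `T`
through arbitrary points of the fibres it crosses, and two points of one fibre are joined inside
`T` through a neighbouring fibre, at distance `2` unless adjacent. Given `2 ≤ i ≤ |G|·|H|`, take
an isometric `S` of `G` with `|S| = k` and `k ≤ i ≤ k·|H|`, and any `T` of size `i` between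
`S × {x}` and `S × V(H)`.
-/

open SimpleGraph

variable {α β : Type*}

/-- The lexicographic product `G[H]`. -/
def lexProd (G : SimpleGraph α) (H : SimpleGraph β) : SimpleGraph (α × β) where
  Adj p q := G.Adj p.1 q.1 ∨ (p.1 = q.1 ∧ H.Adj p.2 q.2)
  symm := by
    constructor
    rintro ⟨u, x⟩ ⟨v, y⟩ (h | ⟨h1, h2⟩)
    · exact Or.inl h.symm
    · exact Or.inr ⟨h1.symm, h2.symm⟩
  loopless := by
    constructor
    rintro ⟨u, x⟩ (h | ⟨-, h⟩)
    · exact G.irrefl h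
    · exact H.irrefl h

/-- The induced subgraph on `S` is an isometric subgraph of `G`. -/
def IsometricSet (G : SimpleGraph α) (S : Set α) : Prop :=
  ∀ a b : S, (G.induce S).edist a b = G.edist a.1 b.1

/-- The set of orders of isometric (induced) subgraphs of `G`. -/
def dpSet (G : SimpleGraph α) : Set ℕ :=
  {k | ∃ S : Finset α, S.card = k ∧ IsometricSet G ↑S}

/-- `G` is distance preserving. -/
def IsDP [Fintype α] (G : SimpleGraph α) : Prop :=
  G.Connected ∧ ∀ i : ℕ, 1 ≤ i → i ≤ Fintype.card α → i ∈ dpSet G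

/-- `l` is an sdp sequence for `G`. -/
def IsSdpList [Fintype α] (G : SimpleGraph α) (l : List α) : Prop :=
  l.Nodup ∧ (∀ v : α, v ∈ l) ∧
    ∀ s : ℕ, IsometricSet G {v : α | v ∉ l.take s}

/-- `G` is sequentially distance preserving. -/
def IsSDP [Fintype α] (G : SimpleGraph α) : Prop :=
  G.Connected ∧ ∃ l : List α, IsSdpList G l

namespace SimpleGraph

variable {V W : Type*} {G : SimpleGraph V} {G' : SimpleGraph W}

theorem edist_map_le_of_adj {f : V → W}
    (hf : ∀ ⦃a b⦄, G.Adj a b → G'.Adj (f a) (f b) ∨ f a = f b) (a b : V) :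
    G'.edist (f a) (f b) ≤ G.edist a b := by
  rw [edist_eq_sInf (G := G)]
  refine le_sInf ?_
  rintro _ ⟨w, rfl⟩
  induction w with
  | nil => simp
  | @cons a c b h w ih =>
    calc G'.edist (f a) (f b) ≤ G'.edist (f a) (f c) + G'.edist (f c) (f b) := G'.edist_triangle
      _ ≤ 1 + w.length := add_le_add (edist_le_one_iff_adj_or_eq.mpr (hf h)) ih
      _ = (w.cons h).length := by rw [Walk.length_cons]; push_cast; ring

theorem Hom.edist_le (f : G →g G') (a b : V) : G'.edist (f a) (f b) ≤ G.edist a b :=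
  edist_map_le_of_adj (fun _ _ h => Or.inl (f.map_adj h)) a b

theorem edist_le_induce_edist {S : Set V} (a b : S) : G.edist a b ≤ (G.induce S).edist a b :=
  (Embedding.induce S).toHom.edist_le a b

end SimpleGraph

theorem IsometricSet.induce_preconnected {G : SimpleGraph α} {S : Set α} (hS : IsometricSet G S)
    (hG : G.Preconnected) : (G.induce S).Preconnected := fun a b =>
  reachable_of_edist_ne_top (hS a b ▸ edist_ne_top_iff_reachable.mpr (hG a b))

theorem Set.Subsingleton.isometricSet {G : SimpleGraph α} {S : Set α} (hS : S.Subsingleton) :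
    IsometricSet G S := by
  rintro ⟨a, ha⟩ ⟨b, hb⟩
  obtain rfl := hS ha hb
  simp

section LexProd

variable {G : SimpleGraph α} {H : SimpleGraph β}

theorem lexProd_edist_fst_le (p q : α × β) : G.edist p.1 q.1 ≤ (lexProd G H).edist p q :=
  edist_map_le_of_adj (fun _ _ (h : (lexProd G H).Adj _ _) => h.imp id And.left) p q

theorem lexProd_connected [Nonempty β] (hG : G.Connected) (hnbr : ∀ a, ∃ b, G.Adj a b) :
    (lexProd G H).Connected := by
  have : Nonempty α := hG.nonempty
  refine (connected_iff _).mpr ⟨fun ⟨a, x⟩ ⟨b, y⟩ => ?_, inferInstance⟩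
  obtain ⟨c, hbc⟩ := hnbr b
  have hrow : (lexProd G H).Reachable (a, x) (b, x) :=
    (hG.preconnected a b).map (⟨fun a => (a, x), Or.inl⟩ : G →g lexProd G H)
  -- two vertices of one fibre are joined through any vertex of a neighbouring fibre
  have hout : (lexProd G H).Adj (b, x) (c, x) := Or.inl hbc
  have hin : (lexProd G H).Adj (c, x) (b, y) := Or.inl hbc.symm
  exact hrow.trans (hout.reachable.trans hin.reachable)

variable {T : Set (α × β)}

theorem lexProd_induce_edist_le_length {a b : Prod.fst '' T}
    (w : (G.induce (Prod.fst '' T)).Walk a b) (hw : w.length ≠ 0) (p q : T)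
    (hp : p.1.1 = a) (hq : q.1.1 = b) :
    ((lexProd G H).induce T).edist p q ≤ w.length := by
  induction w generalizing p with
  | nil => exact absurd rfl hw
  | @cons a c b h w ih =>
    by_cases hw0 : w.length = 0
    · obtain rfl := w.eq_of_length_eq_zero hw0
      have hadj : ((lexProd G H).induce T).Adj p q := Or.inl (hp ▸ hq ▸ h)
      calc _ ≤ 1 := edist_le_one_iff_adj_or_eq.mpr (Or.inl hadj)
        _ ≤ _ := by simp
    · obtain ⟨r, hrT, hrc⟩ := c.2
      have hadj : ((lexProd G H).induce T).Adj p ⟨r, hrT⟩ := Or.inl (hp ▸ hrc ▸ h)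
      calc ((lexProd G H).induce T).edist p q
          ≤ ((lexProd G H).induce T).edist p ⟨r, hrT⟩ +
            ((lexProd G H).induce T).edist ⟨r, hrT⟩ q := SimpleGraph.edist_triangle
        _ ≤ 1 + w.length :=
          add_le_add (edist_le_one_iff_adj_or_eq.mpr (Or.inl hadj)) (ih hw0 _ hrc hq)
        _ = (w.cons h).length := by rw [Walk.length_cons]; push_cast; ring

theorem lexProd_induce_edist_le_of_fst_ne (p q : T) (hpq : p.1.1 ≠ q.1.1) :
    ((lexProd G H).induce T).edist p q ≤
      (G.induce (Prod.fst '' T)).edist ⟨p.1.1, Set.mem_image_of_mem _ p.2⟩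
        ⟨q.1.1, Set.mem_image_of_mem _ q.2⟩ := by
  rw [edist_eq_sInf (G := G.induce _)]
  refine le_sInf ?_
  rintro _ ⟨w, rfl⟩
  exact lexProd_induce_edist_le_length w (fun h0 => hpq (congrArg Subtype.val
    (w.eq_of_length_eq_zero h0))) p q rfl rfl

theorem lexProd_induce_edist_le_two_of_fst_eq
    (hnbr : ∀ a : Prod.fst '' T, ∃ b, (G.induce (Prod.fst '' T)).Adj a b)
    (p q : T) (hpq : p.1.1 = q.1.1) : ((lexProd G H).induce T).edist p q ≤ 2 := by
  obtain ⟨⟨c, r, hrT, hrc⟩, hc⟩ := hnbr ⟨p.1.1, Set.mem_image_of_mem _ p.2⟩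
  have hpr : ((lexProd G H).induce T).Adj p ⟨r, hrT⟩ := Or.inl (hrc ▸ hc)
  have hrq : ((lexProd G H).induce T).Adj ⟨r, hrT⟩ q := Or.inl (hpq ▸ hrc ▸ hc.symm)
  exact (Walk.cons hpr (Walk.cons hrq Walk.nil)).edist_le

theorem isometricSet_lexProd (hS : IsometricSet G (Prod.fst '' T))
    (hnbr : ∀ a : Prod.fst '' T, ∃ b, (G.induce (Prod.fst '' T)).Adj a b) :
    IsometricSet (lexProd G H) T := by
  intro p q
  refine le_antisymm ?_ (edist_le_induce_edist p q)
  by_cases hpq : p.1.1 = q.1.1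
  · rcases le_or_gt ((lexProd G H).edist p q) 1 with h1 | h1
    · rcases edist_le_one_iff_adj_or_eq.mp h1 with hadj | heq
      · rw [edist_eq_one_iff_adj.mpr hadj]
        exact edist_le_one_iff_adj_or_eq.mpr (Or.inl hadj)
      · rw [Subtype.ext heq, edist_self]
        exact zero_le
    · calc ((lexProd G H).induce T).edist p q ≤ 2 :=
            lexProd_induce_edist_le_two_of_fst_eq hnbr p q hpq
        _ ≤ _ := Order.add_one_le_of_lt h1
  · calc ((lexProd G H).induce T).edist p q ≤ _ := lexProd_induce_edist_le_of_fst_ne p q hpq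
      _ = G.edist p.1.1 q.1.1 := hS _ _
      _ ≤ _ := lexProd_edist_fst_le p.1 q.1

theorem mem_dpSet_lexProd [Fintype β] [Nonempty β] (hG : G.Connected) {S : Finset α}
    (hS : IsometricSet G S) (hS2 : 2 ≤ S.card) {j : ℕ} (hSj : S.card ≤ j)
    (hj : j ≤ S.card * Fintype.card β) : j ∈ dpSet (lexProd G H) := by
  classical
  obtain ⟨x⟩ := ‹Nonempty β›
  obtain ⟨T, hxT, hTS, rfl⟩ := Finset.exists_subsuperset_card_eq (n := j)
    (Finset.product_subset_product_right (s := S) (Finset.subset_univ {x}))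
    (by rwa [Finset.card_product, Finset.card_singleton, mul_one])
    (by rwa [Finset.card_product, Finset.card_univ])
  have hfst : Prod.fst '' (T : Set (α × β)) = S := by
    ext a
    constructor
    · rintro ⟨p, hp, rfl⟩
      exact (Finset.mem_product.mp (hTS hp)).1
    · exact fun ha =>
        ⟨(a, x), hxT (Finset.mk_mem_product ha (Finset.mem_singleton_self x)), rfl⟩
  have : Nontrivial (S : Set α) := Finset.one_lt_card_iff_nontrivial.mp hS2 |>.coe_sort
  refine ⟨T, rfl, isometricSet_lexProd (hfst ▸ hS) ?_⟩
  rw [hfst]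
  exact (hS.induce_preconnected hG.preconnected).exists_adj_of_nontrivial

end LexProd

theorem Nat.exists_le_le_mul_of_le_mul {i m n : ℕ} (hm : 0 < m) (hn : 2 ≤ n) (hi : 2 ≤ i)
    (hin : i ≤ n * m) : ∃ k, 2 ≤ k ∧ k ≤ n ∧ k ≤ i ∧ i ≤ k * m := by
  -- `(i - 1) / m + 1` is the number of fibres of size `m` needed to hold `i` points
  set q := (i - 1) / m
  have hqm : q * m ≤ i - 1 := Nat.div_mul_le_self _ _
  have hqm' : i - 1 < q * m + m := Nat.lt_div_mul_add hm
  have hqn : q < n := Nat.lt_of_mul_lt_mul_right (a := m) (by omega)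
  have hqi : q ≤ i - 1 := Nat.div_le_self _ _
  refine ⟨max 2 (q + 1), le_max_left _ _, max_le hn hqn, max_le hi (by omega), ?_⟩
  calc i ≤ (q + 1) * m := by rw [Nat.succ_mul]; omega
    _ ≤ max 2 (q + 1) * m := Nat.mul_le_mul_right _ (le_max_right _ _)

theorem stmt_4 (G : SimpleGraph α) (H : SimpleGraph β)
    [Fintype α] (hcard : 2 ≤ Fintype.card α) (hG : IsDP G)
    [Fintype β] [Nonempty β] :
    IsDP (lexProd G H) := by
  obtain ⟨hGc, hGdp⟩ := hG
  have : Nontrivial α := Fintype.one_lt_card_iff_nontrivial.mp hcard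
  have hconn := lexProd_connected (H := H) hGc hGc.preconnected.exists_adj_of_nontrivial
  refine ⟨hconn, fun i hi1 hi => ?_⟩
  obtain rfl | hi2 := hi1.eq_or_lt
  · obtain ⟨p⟩ := hconn.nonempty
    exact ⟨{p}, Finset.card_singleton p, by simpa using Set.subsingleton_singleton.isometricSet⟩
  rw [Fintype.card_prod] at hi
  obtain ⟨k, hk2, hkn, hki, hik⟩ := Nat.exists_le_le_mul_of_le_mul Fintype.card_pos hcard hi2 hi
  obtain ⟨S, rfl, hS⟩ := hGdp k (by omega) hkn
  exact mem_dpSet_lexProd hGc hS hk2 hki hik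
end

section
/- Let G be a connected graph with at least 2 vertices and K an induced subgraph of G[H]. Then K is isometric in G[H] if and only if: π(K) is isometric in G when |π(K)| ≥ 2, and K has diameter at most 2 when |π(K)| = 1. -/
open SimpleGraph

variable {α β : Type*}

/-!
Off a fibre, adjacency in `G[H]` is adjacency of first coordinates. Hence, for two vertices in
different fibres, every walk projects to a walk of `G` that is no longer, and every walk of `G`
lifts to one of the same length; this holds in `G[H]` against `G` and in `K` against `π(K)`, so
these distances in `K` and `G[H]` are those of `π(K)` and `G`. Two vertices of one fibre are at
distance at most `2` through any neighbour of their first coordinate, in `G[H]` because `G` is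
connected with two vertices, in `K` because an isometric `π(K)` with two vertices is connected;
and an induced subgraph distorts no distance of length at most `2`.
-/

namespace SimpleGraph

variable {V W : Type*} {G : SimpleGraph V} {G' : SimpleGraph W}

theorem edist_le_of_forall_walk {a b : V} {c d : W}
    (h : ∀ w : G.Walk a b, G'.edist c d ≤ w.length) : G'.edist c d ≤ G.edist a b :=
  le_sInf <| by rintro _ ⟨w, rfl⟩; exact h w

theorem edist_le_two_of_adj_of_adj {a b c : V} (hac : G.Adj a c) (hcb : G.Adj c b) :
    G.edist a b ≤ 2 :=
  (Walk.cons hac (Walk.cons hcb .nil)).edist_le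

theorem edist_apply_le_of_adj {f : V → W}
    (hf : ∀ a b, G.Adj a b → f a = f b ∨ G'.Adj (f a) (f b)) (a b : V) :
    G'.edist (f a) (f b) ≤ G.edist a b := by
  refine edist_le_of_forall_walk fun w => ?_
  induction w with
  | nil => simp
  | @cons a c b hac w ih =>
    rw [Walk.length_cons, Nat.cast_add, Nat.cast_one]
    rcases hf a c hac with hfac | hfac
    · rw [hfac]
      exact ih.trans le_self_add
    · calc G'.edist (f a) (f b) ≤ G'.edist (f a) (f c) + G'.edist (f c) (f b) :=
            G'.edist_triangle
        _ ≤ 1 + w.length := add_le_add (edist_eq_one_iff_adj.mpr hfac).le ih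
        _ = w.length + 1 := add_comm _ _

/-- A walk of `G'` lifts vertex by vertex: its ends to the prescribed `a` and `b`, its inner
vertices to arbitrary preimages. -/
theorem edist_le_edist_apply_of_adj {f : V → W} (hsurj : Function.Surjective f)
    (hf : ∀ a b, G'.Adj (f a) (f b) → G.Adj a b) {a b : V} (hab : f a ≠ f b) :
    G.edist a b ≤ G'.edist (f a) (f b) := by
  suffices key : ∀ {c d : W} (w : G'.Walk c d) (a b : V), f a = c → f b = d → c ≠ d →
      G.edist a b ≤ w.length from edist_le_of_forall_walk fun w => key w a b rfl rfl hab
  intro c d w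
  induction w with
  | nil => exact fun _ _ _ _ hne => absurd rfl hne
  | @cons c e d hce w ih =>
    intro a b ha hb _
    rw [Walk.length_cons, Nat.cast_add, Nat.cast_one]
    obtain ⟨a', rfl⟩ := hsurj e
    by_cases hed : f a' = d
    · have hadj : G.Adj a b := hf a b (by rw [ha, hb, ← hed]; exact hce)
      rw [edist_eq_one_iff_adj.mpr hadj]
      exact le_add_self
    · have hadj : G.Adj a a' := hf a a' (ha ▸ hce)
      calc G.edist a b ≤ G.edist a a' + G.edist a' b := G.edist_triangle
        _ ≤ 1 + w.length := add_le_add (edist_eq_one_iff_adj.mpr hadj).le (ih a' b rfl hb hed)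
        _ = w.length + 1 := add_comm _ _

theorem edist_apply_eq_of_adj_iff {f : V → W} (hsurj : Function.Surjective f)
    (hf : ∀ a b, f a ≠ f b → (G.Adj a b ↔ G'.Adj (f a) (f b))) {a b : V}
    (hab : f a ≠ f b) : G'.edist (f a) (f b) = G.edist a b :=
  le_antisymm
    (edist_apply_le_of_adj (fun a b h => (em _).imp_right fun hne => (hf a b hne).mp h) a b)
    (edist_le_edist_apply_of_adj hsurj (fun a b h => (hf a b h.ne).mpr h) hab)

theorem edist_le_edist_induce (S : Set V) (a b : S) : G.edist a b ≤ (G.induce S).edist a b :=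
  edist_apply_le_of_adj (G := G.induce S) (f := Subtype.val) (fun _ _ h => .inr h) a b

/-- Distances `0` and `1` are the same in `G` and in an induced subgraph. -/
theorem edist_induce_eq_of_le_two {S : Set V} {a b : S} (h : (G.induce S).edist a b ≤ 2) :
    (G.induce S).edist a b = G.edist a b := by
  refine le_antisymm ?_ (edist_le_edist_induce S a b)
  by_cases hle : G.edist a b ≤ 1
  · rcases edist_le_one_iff_adj_or_eq.mp hle with hadj | hab
    · rw [edist_eq_one_iff_adj.mpr hadj]
      exact (edist_eq_one_iff_adj.mpr (show (G.induce S).Adj a b from hadj)).le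
    · rw [Subtype.ext hab, edist_self]
      exact zero_le
  · exact h.trans (Order.add_one_le_of_lt (not_le.mp hle))

theorem IsometricSet.induce_preconnected {S : Set V} (hG : G.Preconnected)
    (hS : IsometricSet G S) : (G.induce S).Preconnected := fun a b =>
  reachable_of_edist_ne_top (by rw [hS a b]; exact edist_ne_top_iff_reachable.mpr (hG a b))

end SimpleGraph

open Set

section LexProd

variable {G : SimpleGraph α} {H : SimpleGraph β}

theorem lexProd_adj_iff_of_fst_ne {p q : α × β} (h : p.1 ≠ q.1) :
    (lexProd G H).Adj p q ↔ G.Adj p.1 q.1 := by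
  simp [lexProd, h]

theorem lexProd_edist_eq_of_fst_ne {p q : α × β} (h : p.1 ≠ q.1) :
    (lexProd G H).edist p q = G.edist p.1 q.1 :=
  have : Nonempty β := ⟨p.2⟩
  (edist_apply_eq_of_adj_iff Prod.fst_surjective (fun _ _ => lexProd_adj_iff_of_fst_ne) h).symm

theorem lexProd_induce_edist_eq_of_fst_ne {S : Set (α × β)} {a b : S} (h : a.1.1 ≠ b.1.1) :
    ((lexProd G H).induce S).edist a b =
      (G.induce (Prod.fst '' S)).edist (imageFactorization Prod.fst S a)
        (imageFactorization Prod.fst S b) :=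
  (edist_apply_eq_of_adj_iff imageFactorization_surjective
    (fun _ _ hne => lexProd_adj_iff_of_fst_ne fun h => hne (Subtype.ext h))
    (by simpa [imageFactorization] using h)).symm

theorem lexProd_edist_le_two_of_fst_eq {p q : α × β} {w : α} (hw : G.Adj p.1 w)
    (h : p.1 = q.1) : (lexProd G H).edist p q ≤ 2 :=
  edist_le_two_of_adj_of_adj (c := (w, p.2)) (.inl hw) (.inl (h ▸ hw.symm))

theorem lexProd_induce_edist_le_two_of_fst_eq_s5 {S : Set (α × β)} {a b c : S}
    (hc : G.Adj a.1.1 c.1.1) (h : a.1.1 = b.1.1) : ((lexProd G H).induce S).edist a b ≤ 2 :=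
  edist_le_two_of_adj_of_adj (c := c) (.inl hc) (.inl (h ▸ hc.symm))

end LexProd

theorem stmt_5 (G : SimpleGraph α) (H : SimpleGraph β)
    (hG : G.Connected) [Fintype α] (hcard : 2 ≤ Fintype.card α)
    (S : Set (α × β)) :
    IsometricSet (lexProd G H) S ↔
      (((Prod.fst '' S).Nontrivial → IsometricSet G (Prod.fst '' S)) ∧
       ((∃ u : α, Prod.fst '' S = {u}) →
          ∀ a b : S, ((lexProd G H).induce S).edist a b ≤ 2)) := by
  have mem (a : S) : a.1.1 ∈ Prod.fst '' S := mem_image_of_mem _ a.2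
  constructor
  · intro hS
    refine ⟨fun _ c d => ?_, fun ⟨u, hu⟩ a b => ?_⟩
    · obtain ⟨a, rfl⟩ := imageFactorization_surjective c
      obtain ⟨b, rfl⟩ := imageFactorization_surjective d
      by_cases hab : a.1.1 = b.1.1
      · simp [imageFactorization, hab]
      · rw [← lexProd_induce_edist_eq_of_fst_ne hab, hS, lexProd_edist_eq_of_fst_ne hab]
        rfl
    · have : Nontrivial α := Fintype.one_lt_card_iff_nontrivial.mp hcard
      obtain ⟨w, hw⟩ := hG.preconnected.exists_adj_of_nontrivial a.1.1
      rw [hS]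
      exact lexProd_edist_le_two_of_fst_eq hw ((hu ▸ subsingleton_singleton) (mem a) (mem b))
  · rintro ⟨hπS, hfibre⟩ a b
    by_cases hab : a.1.1 = b.1.1
    · refine edist_induce_eq_of_le_two ?_
      rcases eq_singleton_or_nontrivial (mem a) with hu | hnt
      · exact hfibre ⟨_, hu⟩ a b
      · have : Nontrivial (Prod.fst '' S) := nontrivial_coe_sort.mpr hnt
        obtain ⟨d, hd⟩ := ((hπS hnt).induce_preconnected hG.preconnected
          ).exists_adj_of_nontrivial (imageFactorization Prod.fst S a)
        obtain ⟨c, rfl⟩ := imageFactorization_surjective d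
        exact lexProd_induce_edist_le_two_of_fst_eq_s5 hd hab
    · rw [lexProd_induce_edist_eq_of_fst_ne hab, hπS ⟨_, mem a, _, mem b, hab⟩,
        lexProd_edist_eq_of_fst_ne hab]
      rfl
end

section
/- Every distance-hereditary graph is sequentially distance preserving. -/
open SimpleGraph

variable {α β : Type*}

/-!
A finite connected graph has a vertex whose deletion leaves it connected (a leaf of a spanning
tree). Deleting such vertices one at a time orders the vertices so that every set of vertices
still present induces a connected subgraph, and in a distance-hereditary graph such a subgraph
is isometric.
-/

namespace SimpleGraph

variable {V : Type*} {G : SimpleGraph V}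

lemma Connected.exists_connected_induce_diff_singleton {s : Set V} [Finite s] (hs : s.Nontrivial)
    (h : (G.induce s).Connected) : ∃ v ∈ s, (G.induce (s \ {v})).Connected := by
  have : Nontrivial s := hs.coe_sort
  obtain ⟨v, hv⟩ := h.exists_connected_induce_compl_singleton_of_finite_nontrivial
  let f : (G.induce s).induce {v}ᶜ →g G.induce (s \ {(v : V)}) :=
    { toFun w := ⟨w.1.1, w.1.2, fun hw => w.2 (Subtype.ext hw)⟩
      map_rel' := id }
  refine ⟨v, v.2, hv.map f ?_⟩
  rintro ⟨w, hws, hwv⟩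
  exact ⟨⟨⟨w, hws⟩, fun h => hwv (congrArg Subtype.val h)⟩, rfl⟩

def SuffixesInduceConnected (G : SimpleGraph V) (l : List V) : Prop :=
  ∀ k < l.length, (G.induce {v | v ∈ l.drop k}).Connected

lemma SuffixesInduceConnected.cons {v : V} {l : List V}
    (hvl : (G.induce {w | w ∈ v :: l}).Connected) (hl : G.SuffixesInduceConnected l) :
    G.SuffixesInduceConnected (v :: l)
  | 0, _ => hvl
  | k + 1, hk => hl k (Nat.lt_of_succ_lt_succ hk)

theorem exists_suffixesInduceConnected (s : Finset V) (hs : (G.induce (s : Set V)).Connected) :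
    ∃ l : List V, l.Nodup ∧ (∀ v, v ∈ l ↔ v ∈ s) ∧ G.SuffixesInduceConnected l := by
  classical
  induction s using Finset.strongInduction with
  | _ s ih =>
  have hcoe {l : List V} (hl : ∀ v, v ∈ l ↔ v ∈ s) : {v | v ∈ l} = (s : Set V) := Set.ext hl
  obtain ⟨a, ha⟩ := Set.nonempty_coe_sort.1 hs.nonempty
  rcases Finset.eq_singleton_or_nontrivial ha with rfl | hnt
  · have hmem : ∀ v, v ∈ [a] ↔ v ∈ ({a} : Finset V) := by simp
    exact ⟨[a], List.nodup_singleton a, hmem,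
      .cons (hcoe hmem ▸ hs) fun k hk => absurd hk (Nat.not_lt_zero k)⟩
  obtain ⟨v, hvs, hconn⟩ := hs.exists_connected_induce_diff_singleton hnt
  rw [Finset.mem_coe] at hvs
  rw [← Finset.coe_erase] at hconn
  obtain ⟨l, hnd, hmem, hl⟩ := ih _ (Finset.erase_ssubset hvs) hconn
  have hmem' : ∀ w, w ∈ v :: l ↔ w ∈ s := by
    intro w
    rw [List.mem_cons, hmem, Finset.mem_erase]
    by_cases hw : w = v <;> simp [hw, hvs]
  exact ⟨v :: l, List.nodup_cons.2 ⟨fun h => Finset.notMem_erase v s ((hmem v).1 h), hnd⟩, hmem',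
    .cons (hcoe hmem' ▸ hs) hl⟩

end SimpleGraph

lemma List.Nodup.setOf_notMem_take_eq {l : List α} (hnd : l.Nodup) (hl : ∀ v, v ∈ l) (k : ℕ) :
    {v | v ∉ l.take k} = {v | v ∈ l.drop k} := by
  ext v
  have hv := hl v
  rw [← List.take_append_drop k l, List.mem_append] at hv
  exact ⟨hv.resolve_left, fun hd ht => List.disjoint_take_drop hnd le_rfl ht hd⟩

theorem stmt_14 (G : SimpleGraph α) [Fintype α] (hG : G.Connected)
    (hDH : ∀ S : Set α, (G.induce S).Connected → IsometricSet G S) :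
    IsSDP G := by
  have huniv : (G.induce ((Finset.univ : Finset α) : Set α)).Connected := by
    rw [Finset.coe_univ]
    exact (induceUnivIso G).connected_iff.2 hG
  obtain ⟨l, hnd, hmem, hl⟩ := exists_suffixesInduceConnected Finset.univ huniv
  have hall : ∀ v, v ∈ l := fun v => (hmem v).2 (Finset.mem_univ v)
  refine ⟨hG, l, hnd, hall, fun k => ?_⟩
  rw [hnd.setOf_notMem_take_eq hall]
  rcases lt_or_ge k l.length with hk | hk
  · exact hDH _ (hl k hk)
  · rw [List.drop_eq_nil_of_le hk]
    exact fun a => absurd a.2 List.not_mem_nil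
end
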